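/- arXiv:2405.09626 — 2 statements merged into one kernel-verified Lean document; each statement's English description precedes it below -/
import Mathlib

section
/- Let d ≥ 1, n ≥ 1, p ∈ [0,1], and let μ be a partition of n into at most d parts with μ₂ ≥ 1. For a Borel probability measure q on the unitary group U(d), define ρ_=^{(q)} := ∫ U^{⊗n} |e_{(n)}⟩⟨e_{(n)}| (U^{⊗n})^† dq(U) and ρ_≠^{μ,(q)} := ∫ U^{⊗n} |e_μ⟩⟨e_μ| (U^{⊗n})^† dq(U), and for Hermitian Π with 0 ⪯ Π ⪯ I set g(Π, q) := p·Tr[Π ρ_=^{(q)}] + (1−p)·Tr[(I−Π) ρ_≠^{μ,(q)}]. Then the adversarial-unknown value equals the Haar-random value: inf over all Borel probability measures q on U(d) of (sup over Π with 0 ⪯ Π ⪯ I of g(Π,q)) equals sup over Π with 0 ⪯ Π ⪯ I of g(Π, q_Haar), where q_Haar is the Haar probability measure on U(d). -/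
open MeasureTheory Matrix
open scoped ComplexOrder

noncomputable section

/-- The unitary group `U(d)`. -/
abbrev UG (d : ℕ) := Matrix.unitaryGroup (Fin d) ℂ

noncomputable instance (d : ℕ) : MeasurableSpace (UG d) := borel _

instance (d : ℕ) : BorelSpace (UG d) := ⟨rfl⟩

/-- The permutation matrix `ψ(π)` on `(ℂ^d)^{⊗n}`, with `(x,y)` entry `1` iff `y = x ∘ π`. -/
def psi (d n : ℕ) (π : Equiv.Perm (Fin n)) : Matrix (Fin n → Fin d) (Fin n → Fin d) ℂ :=
  Matrix.of fun x y => if y = x ∘ π then 1 else 0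

/-- The symmetrizer `Π_{(n)} = (1/n!) ∑_{π ∈ S_n} ψ(π)`. -/
def symmetrizer (d n : ℕ) : Matrix (Fin n → Fin d) (Fin n → Fin d) ℂ :=
  ((n.factorial : ℂ))⁻¹ • ∑ π : Equiv.Perm (Fin n), psi d n π

/-- The `n`-fold tensor power of a `d × d` matrix: `(U^{⊗n})_{x,y} = ∏ i, U_{x i, y i}`. -/
def tpow (d n : ℕ) (U : Matrix (Fin d) (Fin d) ℂ) :
    Matrix (Fin n → Fin d) (Fin n → Fin d) ℂ :=
  Matrix.of fun x y => ∏ i, U (x i) (y i)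

/-- The list consisting of `μ 0` copies of `0`, then `μ 1` copies of `1`, etc. -/
def wordList (d : ℕ) (μ : Fin d → ℕ) : List (Fin d) :=
  (List.ofFn fun i => List.replicate (μ i) i).flatten

lemma wordList_length (d : ℕ) (μ : Fin d → ℕ) : (wordList d μ).length = ∑ i, μ i := by
  simp [wordList, List.length_flatten, Function.comp, List.sum_ofFn]

/-- The word indexing the basis vector `|e_μ⟩`: the first `μ 0` tensor factors carry the
first basis label, the next `μ 1` factors the second basis label, etc. -/
def word (d n : ℕ) (μ : Fin d → ℕ) (hsum : ∑ i, μ i = n) (j : Fin n) : Fin d :=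
  (wordList d μ).get ⟨j, by rw [wordList_length, hsum]; exact j.isLt⟩

/-- `∫ U^{⊗n} |e_w⟩⟨e_w| (U^{⊗n})^† dq` for a basis word `w` (entrywise Bochner integral). -/
def rhoWord (d n : ℕ) (w : Fin n → Fin d) (q : Measure (UG d)) :
    Matrix (Fin n → Fin d) (Fin n → Fin d) ℂ :=
  Matrix.of fun x y =>
    ∫ U : UG d, tpow d n (U : Matrix (Fin d) (Fin d) ℂ) x w *
      star (tpow d n (U : Matrix (Fin d) (Fin d) ℂ) y w) ∂q

/-- The Haar-twirled unequal state `ρ_≠^μ`. -/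
def rhoNE (d n : ℕ) (μ : Fin d → ℕ) (hsum : ∑ i, μ i = n) (haar : Measure (UG d)) :
    Matrix (Fin n → Fin d) (Fin n → Fin d) ℂ :=
  rhoWord d n (word d n μ hsum) haar

/-- The partition `(n, 0, …, 0)`. -/
def muEq (d n : ℕ) (hd : 0 < d) : Fin d → ℕ := fun i => if i = ⟨0, hd⟩ then n else 0

lemma muEq_sum (d n : ℕ) (hd : 0 < d) : ∑ i, muEq d n hd i = n := by
  simp [muEq]

/-- The equal state `ρ_=^n = ρ_≠^{(n,0,…,0)}`. -/
def rhoEQ (d n : ℕ) (hd : 0 < d) (haar : Measure (UG d)) :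
    Matrix (Fin n → Fin d) (Fin n → Fin d) ℂ :=
  rhoNE d n (muEq d n hd) (muEq_sum d n hd) haar

/-- The set of POVM elements: Hermitian `P` with `0 ⪯ P ⪯ I`. -/
def POVMs (d n : ℕ) : Set (Matrix (Fin n → Fin d) (Fin n → Fin d) ℂ) :=
  {P | P.PosSemidef ∧ (1 - P).PosSemidef}

/-- The average success probability of the test `{P, I - P}` with prior `p` on the equal case. -/
def successProb (d n : ℕ) (hd : 0 < d) (μ : Fin d → ℕ) (hsum : ∑ i, μ i = n)
    (haar : Measure (UG d)) (p : ℝ) (P : Matrix (Fin n → Fin d) (Fin n → Fin d) ℂ) : ℝ :=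
  p * (Matrix.trace (P * rhoEQ d n hd haar)).re +
    (1 - p) * (1 - (Matrix.trace (P * rhoNE d n μ hsum haar)).re)

/-- The objective `g(Π, q) = p Tr[Π ρ_=^{(q)}] + (1-p) Tr[(I-Π) ρ_≠^{μ,(q)}]` for an
adversarially chosen measure `q` on `U(d)`. -/
def advSuccess (d n : ℕ) (hd : 0 < d) (μ : Fin d → ℕ) (hsum : ∑ i, μ i = n) (p : ℝ)
    (q : Measure (UG d)) (P : Matrix (Fin n → Fin d) (Fin n → Fin d) ℂ) : ℝ :=
  p * (Matrix.trace (P * rhoWord d n (word d n (muEq d n hd) (muEq_sum d n hd)) q)).re +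
    (1 - p) * (Matrix.trace ((1 - P) * rhoWord d n (word d n μ hsum) q)).re

/-! Averaging a test `P` over Haar measure, `P ↦ ∫ U^{⊗n} P (U^{⊗n})† dU`, yields a test `T`
that commutes with every `U^{⊗n}`. Then `Tr[T ρ_w^{(q)}] = ⟨w|T|w⟩` for every word `w` and every
measure `q`, so the success probability of `T` does not depend on `q`; since Haar measure is
invariant under inversion as well as left translation, this common value is the Haar success
probability of `P`. Hence every value attainable against Haar is attainable against any `q`, and
the infimum over `q` is attained at Haar measure. -/

theorem Matrix.isCompact_unitaryGroup {m 𝕜 : Type*} [Fintype m] [DecidableEq m] [RCLike 𝕜] :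
    IsCompact (unitaryGroup m 𝕜 : Set (Matrix m m 𝕜)) := by
  refine IsCompact.of_isClosed_subset
    (isCompact_univ_pi fun _ => isCompact_univ_pi fun _ => isCompact_closedBall (0 : 𝕜) 1)
    isClosed_unitary fun U hU i _ j _ => ?_
  simpa using entry_norm_bound_of_unitary hU i j

instance (d : ℕ) : CompactSpace (UG d) :=
  isCompact_iff_compactSpace.mp isCompact_unitaryGroup

instance (d : ℕ) : SecondCountableTopology (UG d) :=
  haveI : SecondCountableTopology (Matrix (Fin d) (Fin d) ℂ) :=
    inferInstanceAs (SecondCountableTopology (Fin d → Fin d → ℂ))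
  TopologicalSpace.Subtype.secondCountableTopology _

theorem MeasureTheory.Measure.isInvInvariant_of_isMulLeftInvariant {G : Type*} [Group G]
    [MeasurableSpace G] [MeasurableMul₂ G] [MeasurableInv G] (μ : Measure G)
    [IsProbabilityMeasure μ] [μ.IsMulLeftInvariant] : μ.IsInvInvariant := by
  refine ⟨Measure.ext fun s hs => ?_⟩
  -- The shears `(x, y) ↦ (y, y⁻¹ x)` and `(x, y) ↦ (x, x⁻¹ y)` both preserve `μ × μ`, and they
  -- pull `univ ×ˢ s⁻¹` and `univ ×ˢ s` back to the same set.
  have hpreimage : (fun z : G × G => (z.2, z.2⁻¹ * z.1)) ⁻¹' (Set.univ ×ˢ s⁻¹)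
      = (fun z : G × G => (z.1, z.1⁻¹ * z.2)) ⁻¹' (Set.univ ×ˢ s) := by
    ext z; simp
  calc μ.inv s = (μ.prod μ) (Set.univ ×ˢ s⁻¹) := by simp [Measure.inv_apply, Measure.prod_prod]
    _ = (μ.prod μ) (Set.univ ×ˢ s) := by
      rw [← (measurePreserving_prod_inv_mul_swap μ μ).measure_preimage
        (MeasurableSet.univ.prod hs.inv).nullMeasurableSet, hpreimage,
        (measurePreserving_prod_inv_mul μ μ).measure_preimage
        (MeasurableSet.univ.prod hs).nullMeasurableSet]
    _ = μ s := by simp [Measure.prod_prod]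

theorem LinearMap.map_of_integral {X m E : Type*} [MeasurableSpace X] [Fintype m]
    [DecidableEq m] [NormedAddCommGroup E] [NormedSpace ℂ E] [CompleteSpace E] {q : Measure X}
    (L : Matrix m m ℂ →ₗ[ℂ] E) {f : X → Matrix m m ℂ}
    (hf : ∀ i j, Integrable (fun x => f x i j) q) :
    L (Matrix.of fun i j => ∫ x, f x i j ∂q) = ∫ x, L (f x) ∂q := by
  have hL : ∀ M : Matrix m m ℂ, L M = ∑ i, ∑ j, M i j • L (Matrix.single i j 1) := fun M => by
    conv_lhs => rw [matrix_eq_sum_single M]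
    simp only [map_sum, ← map_smul, smul_single, smul_eq_mul, mul_one]
  rw [hL, integral_congr_ae (ae_of_all _ fun x => hL (f x)),
    integral_finsetSum _ fun i _ => integrable_finsetSum _ fun j _ => (hf i j).smul_const _]
  simp_rw [integral_finsetSum _ fun j _ => (hf _ j).smul_const _, integral_smul_const, of_apply]

section Twirl

variable {G m : Type*} [Group G] [MeasurableSpace G] [Fintype m] [DecidableEq m]

variable (π : G →* unitaryGroup m ℂ) (q : Measure G) in
def twirl (P : Matrix m m ℂ) : Matrix m m ℂ :=
  Matrix.of fun x y => ∫ g, ((π g : Matrix m m ℂ) * P * (π g : Matrix m m ℂ)ᴴ) x y ∂q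

variable [TopologicalSpace G] [CompactSpace G] [OpensMeasurableSpace G]
  {π : G →* unitaryGroup m ℂ} {q : Measure G}

theorem integrable_conj_apply [IsFiniteMeasure q] (hπ : Continuous π) (P : Matrix m m ℂ)
    (x y : m) :
    Integrable (fun g => ((π g : Matrix m m ℂ) * P * (π g : Matrix m m ℂ)ᴴ) x y) q := by
  have hπ' : Continuous fun g => (π g : Matrix m m ℂ) := continuous_subtype_val.comp hπ
  exact Continuous.integrable_of_hasCompactSupport
    (((hπ'.matrix_mul continuous_const).matrix_mul hπ'.matrix_conjTranspose).matrix_elem x y)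
    (.of_compactSpace _)

theorem map_twirl [IsFiniteMeasure q] (hπ : Continuous π) (L : Matrix m m ℂ →ₗ[ℂ] ℂ)
    (P : Matrix m m ℂ) :
    L (twirl π q P) = ∫ g, L ((π g : Matrix m m ℂ) * P * (π g : Matrix m m ℂ)ᴴ) ∂q :=
  L.map_of_integral (integrable_conj_apply hπ P)

theorem trace_mul_twirl [IsFiniteMeasure q] (hπ : Continuous π) (Q P : Matrix m m ℂ) :
    trace (Q * twirl π q P) =
      ∫ g, trace ((π g : Matrix m m ℂ)ᴴ * Q * (π g : Matrix m m ℂ) * P) ∂q := by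
  have := map_twirl (q := q) hπ ((traceLinearMap m ℂ ℂ).comp (LinearMap.mulLeft ℂ Q)) P
  simp only [LinearMap.comp_apply, LinearMap.mulLeft_apply, traceLinearMap_apply] at this
  rw [this]
  congr! 2 with g
  rw [← Matrix.mul_assoc, ← Matrix.mul_assoc, trace_mul_cycle]
  simp only [Matrix.mul_assoc]

theorem twirl_one_sub [IsProbabilityMeasure q] (hπ : Continuous π) (P : Matrix m m ℂ) :
    twirl π q (1 - P) = 1 - twirl π q P := by
  ext x y
  have hconj : ∀ g, ((π g : Matrix m m ℂ) * (1 - P) * (π g : Matrix m m ℂ)ᴴ) x y =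
      (1 : Matrix m m ℂ) x y - ((π g : Matrix m m ℂ) * P * (π g : Matrix m m ℂ)ᴴ) x y := by
    intro g
    rw [Matrix.mul_sub, Matrix.sub_mul, Matrix.mul_one, Matrix.sub_apply,
      ← star_eq_conjTranspose, Unitary.mul_star_self_of_mem (π g).2]
  simp only [twirl, of_apply, Matrix.sub_apply, hconj]
  rw [integral_sub (integrable_const _) (integrable_conj_apply hπ P x y), integral_const,
    probReal_univ, one_smul]

theorem twirl_posSemidef [IsFiniteMeasure q] (hπ : Continuous π) {P : Matrix m m ℂ}
    (hP : P.PosSemidef) : (twirl π q P).PosSemidef := by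
  refine .of_dotProduct_mulVec_nonneg (IsHermitian.ext fun x y => ?_) fun v => ?_
  · simp only [twirl, of_apply, RCLike.star_def, ← integral_conj]
    congr! 2 with g
    rw [← RCLike.star_def, ← conjTranspose_apply, conjTranspose_mul, conjTranspose_mul,
      conjTranspose_conjTranspose, hP.isHermitian.eq, Matrix.mul_assoc]
  · let L : Matrix m m ℂ →ₗ[ℂ] ℂ :=
      { toFun := fun M => star v ⬝ᵥ M *ᵥ v
        map_add' := fun A B => by simp [add_mulVec, dotProduct_add]
        map_smul' := fun c A => by simp [smul_mulVec, dotProduct_smul] }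
    change 0 ≤ L (twirl π q P)
    rw [map_twirl hπ]
    exact integral_nonneg fun g =>
      (hP.mul_mul_conjTranspose_same (π g : Matrix m m ℂ)).dotProduct_mulVec_nonneg v

theorem mul_twirl_mul_conjTranspose [IsFiniteMeasure q] [MeasurableMul G] [q.IsMulLeftInvariant]
    (hπ : Continuous π) (P : Matrix m m ℂ) (h : G) :
    (π h : Matrix m m ℂ) * twirl π q P * (π h : Matrix m m ℂ)ᴴ = twirl π q P := by
  ext x y
  let L : Matrix m m ℂ →ₗ[ℂ] ℂ := (entryLinearMap ℂ ℂ x y).comp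
    ((LinearMap.mulRight ℂ (π h : Matrix m m ℂ)ᴴ).comp
      (LinearMap.mulLeft ℂ (π h : Matrix m m ℂ)))
  change L (twirl π q P) = _
  rw [map_twirl hπ]
  simp only [L, LinearMap.comp_apply, LinearMap.mulLeft_apply, LinearMap.mulRight_apply,
    entryLinearMap_apply]
  rw [twirl, of_apply, ← integral_mul_left_eq_self
    (fun g => ((π g : Matrix m m ℂ) * P * (π g : Matrix m m ℂ)ᴴ) x y) h]
  simp only [map_mul, UnitaryGroup.mul_val, conjTranspose_mul, Matrix.mul_assoc]

theorem commute_twirl [IsFiniteMeasure q] [MeasurableMul G] [q.IsMulLeftInvariant]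
    (hπ : Continuous π) (P : Matrix m m ℂ) (h : G) :
    Commute (π h : Matrix m m ℂ) (twirl π q P) := by
  calc (π h : Matrix m m ℂ) * twirl π q P
      = (π h : Matrix m m ℂ) * twirl π q P * ((π h : Matrix m m ℂ)ᴴ * π h) := by
        rw [← star_eq_conjTranspose, Unitary.star_mul_self_of_mem (π h).2, Matrix.mul_one]
    _ = twirl π q P * π h := by rw [← Matrix.mul_assoc, mul_twirl_mul_conjTranspose hπ]

theorem trace_mul_twirl_of_commute [IsProbabilityMeasure q] (hπ : Continuous π)
    {Q : Matrix m m ℂ} (hQ : ∀ g, Commute (π g : Matrix m m ℂ) Q) (P : Matrix m m ℂ) :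
    trace (Q * twirl π q P) = trace (Q * P) := by
  have hconj : ∀ g, (π g : Matrix m m ℂ)ᴴ * Q * π g = Q := fun g => by
    rw [Matrix.mul_assoc, ← (hQ g).eq, ← Matrix.mul_assoc, ← star_eq_conjTranspose,
      Unitary.star_mul_self_of_mem (π g).2, Matrix.one_mul]
  simp [trace_mul_twirl hπ, hconj]

theorem trace_twirl_mul [IsFiniteMeasure q] [MeasurableInv G] [q.IsInvInvariant]
    (hπ : Continuous π) (P E : Matrix m m ℂ) :
    trace (twirl π q P * E) = trace (P * twirl π q E) := by
  rw [trace_mul_comm, trace_mul_twirl hπ, trace_mul_twirl hπ,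
    ← integral_inv_eq_self _ q]
  congr! 2 with g
  simp only [map_inv, UnitaryGroup.inv_val, star_eq_conjTranspose, conjTranspose_conjTranspose]
  rw [trace_mul_comm, ← Matrix.mul_assoc, ← Matrix.mul_assoc, trace_mul_comm]
  simp only [Matrix.mul_assoc]

theorem trace_twirl_mul_twirl {haar : Measure G} [IsFiniteMeasure haar] [MeasurableMul G]
    [MeasurableInv G] [haar.IsMulLeftInvariant] [haar.IsInvInvariant] [IsProbabilityMeasure q]
    (hπ : Continuous π) (P E : Matrix m m ℂ) :
    trace (twirl π haar P * twirl π q E) = trace (P * twirl π haar E) := by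
  rw [trace_mul_twirl_of_commute hπ (commute_twirl hπ P), trace_twirl_mul hπ]

theorem trace_mul_twirl_single [IsFiniteMeasure q] (hπ : Continuous π) (Q : Matrix m m ℂ)
    (w : m) :
    trace (Q * twirl π q (single w w 1)) =
      ∫ g, ((π g : Matrix m m ℂ)ᴴ * Q * π g) w w ∂q := by
  simp [trace_mul_twirl hπ, trace_mul_single]

theorem trace_mul_twirl_single_nonneg [IsFiniteMeasure q] (hπ : Continuous π)
    {Q : Matrix m m ℂ} (hQ : Q.PosSemidef) (w : m) :
    0 ≤ trace (Q * twirl π q (single w w 1)) := by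
  rw [trace_mul_twirl_single hπ]
  exact integral_nonneg fun g => (hQ.conjTranspose_mul_mul_same _).diag_nonneg

theorem trace_twirl_single [IsProbabilityMeasure q] (hπ : Continuous π) (w : m) :
    trace (twirl π q (single w w 1)) = 1 := by
  simpa [← star_eq_conjTranspose, Unitary.star_mul_self_of_mem (π _).2]
    using trace_mul_twirl_single (q := q) hπ 1 w

theorem re_trace_mul_twirl_single_le_one [IsProbabilityMeasure q] (hπ : Continuous π)
    {P : Matrix m m ℂ} (hP : (1 - P).PosSemidef) (w : m) :
    (trace (P * twirl π q (single w w 1))).re ≤ 1 := by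
  have h := trace_mul_twirl_single_nonneg (q := q) hπ hP w
  rw [Matrix.sub_mul, Matrix.one_mul, trace_sub, trace_twirl_single hπ] at h
  simpa using (Complex.le_def.mp h).1

end Twirl

theorem continuous_tpow (d n : ℕ) : Continuous (tpow d n) := by
  unfold tpow
  fun_prop

def tpowStarHom (d n : ℕ) :
    Matrix (Fin d) (Fin d) ℂ →⋆* Matrix (Fin n → Fin d) (Fin n → Fin d) ℂ where
  toFun := tpow d n
  map_one' := by
    ext x y
    simp [tpow, one_apply, Finset.prod_boole, funext_iff]
  map_mul' A B := by
    ext x y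
    simp only [tpow, Matrix.mul_apply, Matrix.of_apply, Finset.prod_univ_sum,
      Finset.prod_mul_distrib, Fintype.piFinset_univ]
  map_star' A := by
    ext x y
    simp [tpow, star_prod]

def tpowUnitary (d n : ℕ) : UG d →* unitaryGroup (Fin n → Fin d) ℂ :=
  (Unitary.map (tpowStarHom d n)).toMonoidHom

theorem continuous_tpowUnitary (d n : ℕ) : Continuous (tpowUnitary d n) :=
  continuous_induced_rng.2 ((continuous_tpow d n).comp continuous_subtype_val)

theorem rhoWord_eq_twirl (d n : ℕ) (w : Fin n → Fin d) (q : Measure (UG d)) :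
    rhoWord d n w q = twirl (tpowUnitary d n) q (single w w 1) := by
  ext x y
  simp [rhoWord, twirl, tpowUnitary, tpowStarHom, Matrix.mul_apply, single_apply, ite_and]

section POVM

variable {d n : ℕ} {G : Type*} [Group G] [TopologicalSpace G] [CompactSpace G]
  [MeasurableSpace G] [OpensMeasurableSpace G] {π : G →* unitaryGroup (Fin n → Fin d) ℂ}
  {q : Measure G} {P : Matrix (Fin n → Fin d) (Fin n → Fin d) ℂ}

theorem zero_mem_POVMs : (0 : Matrix (Fin n → Fin d) (Fin n → Fin d) ℂ) ∈ POVMs d n :=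
  ⟨.zero, by simpa using PosSemidef.one⟩

theorem one_sub_mem_POVMs (hP : P ∈ POVMs d n) : 1 - P ∈ POVMs d n :=
  ⟨hP.2, by simpa using hP.1⟩

theorem twirl_mem_POVMs [IsProbabilityMeasure q] (hπ : Continuous π) (hP : P ∈ POVMs d n) :
    twirl π q P ∈ POVMs d n :=
  ⟨twirl_posSemidef hπ hP.1, twirl_one_sub (q := q) hπ P ▸ twirl_posSemidef hπ hP.2⟩

theorem re_trace_mul_twirl_single_mem_Icc [IsProbabilityMeasure q] (hπ : Continuous π)
    (hP : P ∈ POVMs d n) (w : Fin n → Fin d) :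
    (trace (P * twirl π q (single w w 1))).re ∈ Set.Icc 0 1 :=
  ⟨by simpa using (Complex.le_def.mp (trace_mul_twirl_single_nonneg hπ hP.1 w)).1,
    re_trace_mul_twirl_single_le_one hπ hP.2 w⟩

end POVM

section Adversarial

variable {d n : ℕ} (hd : 0 < d) (μ : Fin d → ℕ) (hsum : ∑ i, μ i = n) (p : ℝ)

theorem advSuccess_le (q : Measure (UG d)) [IsProbabilityMeasure q]
    {P : Matrix (Fin n → Fin d) (Fin n → Fin d) ℂ} (hP : P ∈ POVMs d n) :
    advSuccess d n hd μ hsum p q P ≤ |p| + |1 - p| := by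
  obtain ⟨ha0, ha1⟩ := re_trace_mul_twirl_single_mem_Icc (q := q) (continuous_tpowUnitary d n)
    hP (word d n (muEq d n hd) (muEq_sum d n hd))
  obtain ⟨hb0, hb1⟩ := re_trace_mul_twirl_single_mem_Icc (q := q) (continuous_tpowUnitary d n)
    (one_sub_mem_POVMs hP) (word d n μ hsum)
  rw [advSuccess, rhoWord_eq_twirl, rhoWord_eq_twirl]
  have key : ∀ c a : ℝ, 0 ≤ a → a ≤ 1 → c * a ≤ |c| := fun c a h0 h1 =>
    (mul_le_mul_of_nonneg_right (le_abs_self c) h0).trans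
      (mul_le_of_le_one_right (abs_nonneg c) h1)
  exact add_le_add (key _ _ ha0 ha1) (key _ _ hb0 hb1)

theorem advSuccess_twirl (haar : Measure (UG d)) [IsProbabilityMeasure haar]
    [haar.IsMulLeftInvariant] [haar.IsInvInvariant] (q : Measure (UG d)) [IsProbabilityMeasure q]
    (P : Matrix (Fin n → Fin d) (Fin n → Fin d) ℂ) :
    advSuccess d n hd μ hsum p q (twirl (tpowUnitary d n) haar P) =
      advSuccess d n hd μ hsum p haar P := by
  simp only [advSuccess, rhoWord_eq_twirl,
    ← twirl_one_sub (q := haar) (continuous_tpowUnitary d n),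
    trace_twirl_mul_twirl (continuous_tpowUnitary d n)]

theorem bddAbove_advSuccess_image (q : Measure (UG d)) [IsProbabilityMeasure q] :
    BddAbove (advSuccess d n hd μ hsum p q '' POVMs d n) :=
  ⟨|p| + |1 - p|, Set.forall_mem_image.2 fun _ hP => advSuccess_le hd μ hsum p q hP⟩

theorem advSuccess_image_subset (haar : Measure (UG d)) [IsProbabilityMeasure haar]
    [haar.IsMulLeftInvariant] [haar.IsInvInvariant] (q : Measure (UG d)) [IsProbabilityMeasure q] :
    advSuccess d n hd μ hsum p haar '' POVMs d n ⊆ advSuccess d n hd μ hsum p q '' POVMs d n := by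
  rintro _ ⟨P, hP, rfl⟩
  exact ⟨_, twirl_mem_POVMs (continuous_tpowUnitary d n) hP,
    advSuccess_twirl hd μ hsum p haar q P⟩

end Adversarial

/-- Minimax: the adversarial-unknown value over all Borel probability
measures `q` on `U(d)` equals the Haar-random value. -/
theorem adversarial_equals_haar (d n : ℕ) (hd : 2 ≤ d)
    (μ : Fin d → ℕ) (hsum : ∑ i, μ i = n)
    (p : ℝ)
    (haar : Measure (UG d)) [IsProbabilityMeasure haar]
    (hinv : ∀ V : UG d, Measure.map (fun U => V * U) haar = haar) :
    sInf {v : ℝ | ∃ q : ProbabilityMeasure (UG d),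
        v = sSup (advSuccess d n (by omega) μ hsum p (q : Measure (UG d)) '' POVMs d n)}
      = sSup (advSuccess d n (by omega) μ hsum p haar '' POVMs d n) := by
  have : haar.IsMulLeftInvariant := ⟨hinv⟩
  have : haar.IsInvInvariant := haar.isInvInvariant_of_isMulLeftInvariant
  refine IsLeast.csInf_eq ⟨⟨⟨haar, ‹_›⟩, rfl⟩, ?_⟩
  rintro _ ⟨q, rfl⟩
  exact csSup_le_csSup (bddAbove_advSuccess_image _ μ hsum p q)
    ⟨_, Set.mem_image_of_mem _ zero_mem_POVMs⟩ (advSuccess_image_subset _ μ hsum p haar q)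

end
end

section
/- Let d ≥ 1 and n ≥ 1, let μ be a partition of n into at most d parts, and define the permutation-twirled state ρ̃_≠^μ := (1/n!) Σ_{π ∈ S_n} ψ(π) ρ_≠^μ ψ(π)^{−1}. Then the permutation test is insensitive to the input order: Tr[Π_{(n)} · ρ̃_≠^μ] = Tr[Π_{(n)} · ρ_≠^μ] = 1/binom(n,μ). -/
open MeasureTheory Matrix
open scoped ComplexOrder

noncomputable section

/-- The permutation-twirled unequal state `ρ̃_≠^μ = (1/n!) ∑_π ψ(π) ρ_≠^μ ψ(π)⁻¹`. -/
def rhoTwirl (d n : ℕ) (μ : Fin d → ℕ) (hsum : ∑ i, μ i = n) (haar : Measure (UG d)) :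
    Matrix (Fin n → Fin d) (Fin n → Fin d) ℂ :=
  ((n.factorial : ℂ))⁻¹ •
    ∑ π : Equiv.Perm (Fin n), psi d n π * rhoNE d n μ hsum haar * psi d n π⁻¹

/-! Every `ψ(π)` commutes with every `U^{⊗n}`, and `Π_{(n)}` absorbs `ψ(π)` from either side.
The first fact makes `Π_{(n)}` commute with the unitaries `U^{⊗n}`, so averaging over `U` is
invisible to `Tr[Π_{(n)} ·]` and `Tr[Π_{(n)} ρ_≠^μ] = ⟨e_μ|Π_{(n)}|e_μ⟩`; the second makes the
permutation twirl invisible as well. That diagonal entry is the proportion of permutations fixing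
the word of `μ`, namely `∏ μ_i! / n! = 1 / binom(n, μ)`. -/

open Equiv Finset

section TensorPower

variable {d n : ℕ}

lemma psi_mul (π σ : Perm (Fin n)) : psi d n π * psi d n σ = psi d n (π * σ) := by
  ext x z
  rw [mul_apply, sum_eq_single (x ∘ π)]
  · simp only [psi, of_apply, if_true, one_mul, Perm.coe_mul]
    rfl
  · intro y _ hy
    simp [psi, hy]
  · simp

lemma tpow_mul (U V : Matrix (Fin d) (Fin d) ℂ) :
    tpow d n U * tpow d n V = tpow d n (U * V) := by
  ext x z
  simp only [tpow, mul_apply, of_apply, Fintype.prod_sum, prod_mul_distrib]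

lemma tpow_one : tpow d n (1 : Matrix (Fin d) (Fin d) ℂ) = 1 := by
  ext x y
  by_cases h : x = y
  · simp [tpow, one_apply, h]
  · obtain ⟨i, hi⟩ := Function.ne_iff.mp h
    simpa [tpow, one_apply, h] using prod_eq_zero (mem_univ i) (by simp [hi])

lemma conjTranspose_tpow (U : Matrix (Fin d) (Fin d) ℂ) : (tpow d n U)ᴴ = tpow d n Uᴴ := by
  ext x y
  simp [tpow, conjTranspose_apply]

lemma tpow_mem_unitaryGroup {U : Matrix (Fin d) (Fin d) ℂ} (hU : U ∈ unitaryGroup (Fin d) ℂ) :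
    tpow d n U ∈ unitaryGroup (Fin n → Fin d) ℂ := by
  rw [mem_unitaryGroup_iff', star_eq_conjTranspose, conjTranspose_tpow, tpow_mul,
    ← star_eq_conjTranspose, (mem_unitaryGroup_iff').mp hU, tpow_one]

lemma norm_tpow_apply_le_one {U : Matrix (Fin d) (Fin d) ℂ} (hU : U ∈ unitaryGroup (Fin d) ℂ)
    (x y : Fin n → Fin d) : ‖tpow d n U x y‖ ≤ 1 := by
  rw [tpow, of_apply, norm_prod]
  exact prod_le_one (fun _ _ => norm_nonneg _) fun i _ => entry_norm_bound_of_unitary hU _ _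

lemma commute_psi_tpow (π : Perm (Fin n)) (U : Matrix (Fin d) (Fin d) ℂ) :
    Commute (psi d n π) (tpow d n U) := by
  ext x z
  rw [mul_apply, mul_apply, sum_eq_single (x ∘ π), sum_eq_single (z ∘ π.symm)]
  · simp only [psi, tpow, of_apply, if_true, one_mul]
    rw [if_pos (by funext; simp), mul_one]
    simpa using (Equiv.prod_comp π fun i => U (x i) (z (π.symm i)))
  · intro y _ hy
    simp only [psi, of_apply, mul_ite, mul_one, mul_zero]
    exact if_neg fun h => hy (by funext i; simp [h])
  · simp
  · intro y _ hy
    simp [psi, hy]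
  · simp

end TensorPower

section Symmetrizer

variable {d n : ℕ}

lemma symmetrizer_mul_psi (π : Perm (Fin n)) : symmetrizer d n * psi d n π = symmetrizer d n := by
  rw [symmetrizer, smul_mul_assoc, sum_mul]
  simp_rw [psi_mul]
  exact congrArg _ (Equiv.sum_comp (Equiv.mulRight π) (psi d n))

lemma psi_mul_symmetrizer (π : Perm (Fin n)) : psi d n π * symmetrizer d n = symmetrizer d n := by
  rw [symmetrizer, mul_smul_comm, mul_sum]
  simp_rw [psi_mul]
  exact congrArg _ (Equiv.sum_comp (Equiv.mulLeft π) (psi d n))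

lemma commute_symmetrizer_tpow (U : Matrix (Fin d) (Fin d) ℂ) :
    Commute (symmetrizer d n) (tpow d n U) :=
  (Commute.sum_left _ _ _ fun π _ => commute_psi_tpow π U).smul_left _

lemma trace_symmetrizer_mul_conj_psi (A : Matrix (Fin n → Fin d) (Fin n → Fin d) ℂ)
    (π : Perm (Fin n)) :
    trace (symmetrizer d n * (psi d n π * A * psi d n π⁻¹)) = trace (symmetrizer d n * A) := by
  rw [← mul_assoc, ← mul_assoc, trace_mul_cycle, symmetrizer_mul_psi, psi_mul_symmetrizer]

lemma symmetrizer_apply_self (x : Fin n → Fin d) :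
    symmetrizer d n x x = (Fintype.card {π : Perm (Fin n) // x ∘ π = x} : ℂ) / n.factorial := by
  rw [symmetrizer, Matrix.smul_apply, Matrix.sum_apply, smul_eq_mul, inv_mul_eq_div, Fintype.card_subtype,
    card_filter]
  push_cast
  simp only [psi, of_apply, eq_comm]

end Symmetrizer

section Word

lemma ofFn_word (d n : ℕ) (μ : Fin d → ℕ) (hsum : ∑ i, μ i = n) :
    List.ofFn (word d n μ hsum) = wordList d μ := by
  apply List.ext_getElem
  · rw [List.length_ofFn, wordList_length, hsum]
  · intro k _ _
    simp [word]

lemma card_fiber_eq_count {α : Type*} [DecidableEq α] {n : ℕ} (f : Fin n → α) (a : α) :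
    Fintype.card {j // f j = a} = (List.ofFn f).count a := by
  rw [Fintype.card_subtype, ← Multiset.coe_count, ← Fin.univ_val_map, Multiset.count_map]
  simp [Finset.card, eq_comm]

lemma count_wordList (d : ℕ) (μ : Fin d → ℕ) (i : Fin d) : (wordList d μ).count i = μ i := by
  simp [wordList, List.count_flatten, List.map_ofFn, List.sum_ofFn, List.count_replicate]

lemma card_fiber_word (d n : ℕ) (μ : Fin d → ℕ) (hsum : ∑ i, μ i = n) (i : Fin d) :
    Fintype.card {j // word d n μ hsum j = i} = μ i := by
  rw [card_fiber_eq_count, ofFn_word, count_wordList]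

lemma card_stabilizer_word (d n : ℕ) (μ : Fin d → ℕ) (hsum : ∑ i, μ i = n) :
    Fintype.card {π : Perm (Fin n) // word d n μ hsum ∘ π = word d n μ hsum}
      = ∏ i, (μ i).factorial := by
  simp only [DomMulAct.stabilizer_card, card_fiber_word]

lemma symmetrizer_apply_word (d n : ℕ) (μ : Fin d → ℕ) (hsum : ∑ i, μ i = n) :
    symmetrizer d n (word d n μ hsum) (word d n μ hsum)
      = ((Nat.multinomial univ μ : ℂ))⁻¹ := by
  have hspec : (∏ i, (μ i).factorial) * Nat.multinomial univ μ = n.factorial := by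
    rw [Nat.multinomial_spec, hsum]
  rw [symmetrizer_apply_self, card_stabilizer_word, ← hspec]
  have : (∏ i, (μ i).factorial : ℂ) ≠ 0 := by positivity
  push_cast
  field_simp

end Word

section HaarAverage

variable {d n : ℕ}

lemma continuous_tpow_apply (x y : Fin n → Fin d) :
    Continuous fun U : UG d => tpow d n (U : Matrix (Fin d) (Fin d) ℂ) x y := by
  simp only [tpow, of_apply]
  exact continuous_finsetProd _ fun i _ =>
    (continuous_apply (y i)).comp ((continuous_apply (x i)).comp continuous_subtype_val)

lemma integrable_tpow_mul_star_tpow (q : Measure (UG d)) [IsFiniteMeasure q]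
    (x y w : Fin n → Fin d) :
    Integrable (fun U : UG d => tpow d n (U : Matrix (Fin d) (Fin d) ℂ) x w *
      star (tpow d n (U : Matrix (Fin d) (Fin d) ℂ) y w)) q := by
  refine .of_bound ((continuous_tpow_apply x w).mul (continuous_tpow_apply y w).star
    ).aestronglyMeasurable 1 (.of_forall fun U => ?_)
  rw [norm_mul, norm_star]
  exact mul_le_one₀ (norm_tpow_apply_le_one U.2 x w) (norm_nonneg _)
    (norm_tpow_apply_le_one U.2 y w)

lemma conjTranspose_mul_mul_apply_self {ι : Type*} [Fintype ι]
    (T A : Matrix ι ι ℂ) (w : ι) :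
    (Tᴴ * A * T) w w = ∑ x, ∑ y, A x y * (T y w * star (T x w)) := by
  simp only [mul_apply, conjTranspose_apply, sum_mul]
  rw [sum_comm]
  exact sum_congr rfl fun x _ => sum_congr rfl fun y _ => by ring

lemma trace_mul_rhoWord (q : Measure (UG d)) [IsFiniteMeasure q]
    (A : Matrix (Fin n → Fin d) (Fin n → Fin d) ℂ) (w : Fin n → Fin d) :
    trace (A * rhoWord d n w q)
      = ∫ U : UG d, ((tpow d n (U : Matrix (Fin d) (Fin d) ℂ))ᴴ * A *
          tpow d n (U : Matrix (Fin d) (Fin d) ℂ)) w w ∂q := by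
  have hint : ∀ x y, Integrable (fun U : UG d => A x y *
      (tpow d n (U : Matrix (Fin d) (Fin d) ℂ) y w *
        star (tpow d n (U : Matrix (Fin d) (Fin d) ℂ) x w))) q :=
    fun x y => (integrable_tpow_mul_star_tpow q y x w).const_mul _
  simp only [conjTranspose_mul_mul_apply_self]
  rw [integral_finsetSum _ fun x _ => integrable_finsetSum _ fun y _ => hint x y]
  refine sum_congr rfl fun x _ => ?_
  rw [integral_finsetSum _ fun y _ => hint x y]
  simp only [diag_apply, mul_apply, rhoWord, of_apply, integral_const_mul]

lemma trace_symmetrizer_mul_rhoWord (q : Measure (UG d)) [IsProbabilityMeasure q]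
    (w : Fin n → Fin d) :
    trace (symmetrizer d n * rhoWord d n w q) = symmetrizer d n w w := by
  have hconj : ∀ U : UG d, (tpow d n (U : Matrix (Fin d) (Fin d) ℂ))ᴴ * symmetrizer d n *
      tpow d n (U : Matrix (Fin d) (Fin d) ℂ) = symmetrizer d n := fun U => by
    rw [mul_assoc, (commute_symmetrizer_tpow _).eq, ← mul_assoc, ← star_eq_conjTranspose,
      (mem_unitaryGroup_iff').mp (tpow_mem_unitaryGroup U.2), one_mul]
  simp [trace_mul_rhoWord, hconj]

end HaarAverage

lemma trace_symmetrizer_mul_rhoTwirl (d n : ℕ) (μ : Fin d → ℕ) (hsum : ∑ i, μ i = n)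
    (haar : Measure (UG d)) :
    trace (symmetrizer d n * rhoTwirl d n μ hsum haar)
      = trace (symmetrizer d n * rhoNE d n μ hsum haar) := by
  rw [rhoTwirl, Matrix.mul_smul, trace_smul, mul_sum, trace_sum]
  simp only [trace_symmetrizer_mul_conj_psi, sum_const, card_univ, Fintype.card_perm,
    Fintype.card_fin, nsmul_eq_mul, smul_eq_mul]
  rw [← mul_assoc, inv_mul_cancel₀ (Nat.cast_ne_zero.2 n.factorial_ne_zero), one_mul]

theorem permutation_test_order_insensitive_general (d n : ℕ)
    (μ : Fin d → ℕ) (hsum : ∑ i, μ i = n)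
    (haar : Measure (UG d)) [IsProbabilityMeasure haar] :
    Matrix.trace (symmetrizer d n * rhoTwirl d n μ hsum haar)
        = Matrix.trace (symmetrizer d n * rhoNE d n μ hsum haar) ∧
    Matrix.trace (symmetrizer d n * rhoNE d n μ hsum haar)
        = ((Nat.multinomial Finset.univ μ : ℂ))⁻¹ :=
  ⟨trace_symmetrizer_mul_rhoTwirl d n μ hsum haar, by
    rw [rhoNE, trace_symmetrizer_mul_rhoWord, symmetrizer_apply_word]⟩

/-- The permutation test is insensitive to the input order:
`Tr[Π_{(n)} ρ̃_≠^μ] = Tr[Π_{(n)} ρ_≠^μ] = 1/binom(n,μ)`. -/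
theorem permutation_test_order_insensitive (d n : ℕ) (hd : 1 ≤ d) (hn : 1 ≤ n)
    (μ : Fin d → ℕ) (hmono : ∀ i j : Fin d, i ≤ j → μ j ≤ μ i) (hsum : ∑ i, μ i = n)
    (haar : Measure (UG d)) [IsProbabilityMeasure haar]
    (hinv : ∀ V : UG d, Measure.map (fun U => V * U) haar = haar) :
    Matrix.trace (symmetrizer d n * rhoTwirl d n μ hsum haar)
        = Matrix.trace (symmetrizer d n * rhoNE d n μ hsum haar) ∧
    Matrix.trace (symmetrizer d n * rhoNE d n μ hsum haar)
        = ((Nat.multinomial Finset.univ μ : ℂ))⁻¹ :=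
  permutation_test_order_insensitive_general d n μ hsum haar

end
end
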